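/- arXiv:1704.00382 — 3 statements merged into one kernel-verified Lean document; each statement's English description precedes it below -/
import Mathlib

section
/- Let k be a field and let f ∈ k[x,y,z]. If f ∈ (y,z)^{ν₁} ∩ (x,z)^{ν₂} ∩ (x,y)^{ν₃} for nonnegative integers ν₁, ν₂, ν₃, then the monomial x^{ν₁} y^{ν₂} z^{ν₃} divides σ(f) = f(yz, xz, xy). -/
open MvPolynomial

/-! The ideal `(y, z)` is sent by `σ` into `(x)`, since `σ(y) = xz` and `σ(z) = xy`; hence
`σ((y, z)^{ν₁}) ⊆ (x^{ν₁})`, and likewise for the other two variables. Distinct variables are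
non-associate primes, so the three prime-power divisibilities combine into divisibility by
their product. -/

theorem Ideal.pow_dvd_of_mem_pow_of_le_comap {R S F : Type*} [CommSemiring R] [CommSemiring S]
    [FunLike F R S] [RingHomClass F R S] (φ : F) {I : Ideal R} {a : S}
    (hI : I ≤ (Ideal.span {a}).comap φ) {n : ℕ} {f : R} (hf : f ∈ I ^ n) : a ^ n ∣ φ f := by
  have hmap : φ f ∈ (I.map φ) ^ n := Ideal.map_pow (I := I) φ n ▸ Ideal.mem_map_of_mem φ hf
  have hle : I.map φ ≤ Ideal.span {a} := Ideal.map_le_iff_le_comap.mpr hI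
  rw [← Ideal.mem_span_singleton, ← Ideal.span_singleton_pow]
  exact Ideal.pow_right_mono hle n hmap

theorem Ideal.pow_dvd_of_mem_span_pair_pow {R S F : Type*} [CommSemiring R] [CommSemiring S]
    [FunLike F R S] [RingHomClass F R S] (φ : F) {p q : R} {a : S} (hp : a ∣ φ p) (hq : a ∣ φ q)
    {n : ℕ} {f : R} (hf : f ∈ Ideal.span {p, q} ^ n) : a ^ n ∣ φ f := by
  refine Ideal.pow_dvd_of_mem_pow_of_le_comap φ ?_ hf
  rw [Ideal.span_le, Set.pair_subset_iff]
  exact ⟨Ideal.mem_span_singleton.mpr hp, Ideal.mem_span_singleton.mpr hq⟩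

theorem MvPolynomial.isRelPrime_X_pow_X_pow {σ R : Type*} [CommRing R] [IsDomain R]
    [UniqueFactorizationMonoid R] {i j : σ}
    (hij : i ≠ j) (a b : ℕ) : IsRelPrime ((X i : MvPolynomial σ R) ^ a) (X j ^ b) :=
  (X_prime.irreducible.isRelPrime_iff_not_dvd.mpr (by simp [X_dvd_X, hij])).pow

/-- Let `k` be a field and `f ∈ k[x,y,z]`.  If
`f ∈ (y,z)^{ν₁} ∩ (x,z)^{ν₂} ∩ (x,y)^{ν₃}`, then the monomial
`x^{ν₁} y^{ν₂} z^{ν₃}` divides `σ(f) = f(yz, xz, xy)`, where `σ` is the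
quadratic substitution `x ↦ yz, y ↦ xz, z ↦ xy`. -/
theorem stmt2 {k : Type*} [Field k] (f : MvPolynomial (Fin 3) k)
    (ν₁ ν₂ ν₃ : ℕ)
    (h₁ : f ∈ (Ideal.span {(X 1 : MvPolynomial (Fin 3) k), X 2}) ^ ν₁)
    (h₂ : f ∈ (Ideal.span {(X 0 : MvPolynomial (Fin 3) k), X 2}) ^ ν₂)
    (h₃ : f ∈ (Ideal.span {(X 0 : MvPolynomial (Fin 3) k), X 1}) ^ ν₃) :
    (X 0 : MvPolynomial (Fin 3) k) ^ ν₁ * X 1 ^ ν₂ * X 2 ^ ν₃ ∣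
      aeval ![X 1 * X 2, X 0 * X 2, X 0 * X 1] f := by
  set σ := aeval (R := k) ![(X 1 : MvPolynomial (Fin 3) k) * X 2, X 0 * X 2, X 0 * X 1]
  have d₁ : X 0 ^ ν₁ ∣ σ f := Ideal.pow_dvd_of_mem_span_pair_pow σ (by simp [σ]) (by simp [σ]) h₁
  have d₂ : X 1 ^ ν₂ ∣ σ f := Ideal.pow_dvd_of_mem_span_pair_pow σ (by simp [σ]) (by simp [σ]) h₂
  have d₃ : X 2 ^ ν₃ ∣ σ f := Ideal.pow_dvd_of_mem_span_pair_pow σ (by simp [σ]) (by simp [σ]) h₃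
  have r₀₁ : IsRelPrime ((X 0 : MvPolynomial (Fin 3) k) ^ ν₁) (X 1 ^ ν₂) :=
    isRelPrime_X_pow_X_pow (by decide) _ _
  have r₀₁₂ : IsRelPrime ((X 0 : MvPolynomial (Fin 3) k) ^ ν₁ * X 1 ^ ν₂) (X 2 ^ ν₃) :=
    (isRelPrime_X_pow_X_pow (by decide) _ _).mul_left (isRelPrime_X_pow_X_pow (by decide) _ _)
  exact r₀₁₂.mul_dvd (r₀₁.mul_dvd d₁ d₂) d₃
end

section
/- Let k be a field, f ∈ k[x,y,z] homogeneous of degree d, and ν₁, ν₂, ν₃ nonnegative integers with ν₂+ν₃ ≤ d, ν₁+ν₃ ≤ d and ν₁+ν₂ ≤ d. If f ∈ (y,z)^{ν₁} ∩ (x,z)^{ν₂} ∩ (x,y)^{ν₃}, then σ(f) = x^{ν₁} y^{ν₂} z^{ν₃} · g for a (unique) homogeneous polynomial g of degree 2d − ν₁ − ν₂ − ν₃ satisfying g ∈ (y,z)^{d−ν₂−ν₃} ∩ (x,z)^{d−ν₁−ν₃} ∩ (x,y)^{d−ν₁−ν₂}. -/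
/-!
The substitution sends `x^a y^b z^c` to `x^(b+c) y^(a+c) z^(a+b)`, i.e. it replaces each exponent
`m i` by `deg m - m i`. Membership in `(x_i, x_j)^n` is read off the support: every exponent has
`m i + m j ≥ n`. For `f` homogeneous of degree `d`, the hypothesis `f ∈ (y,z)^ν₁` thus says that
every monomial of `σ(f)` has `x`-exponent at least `ν₁`, and similarly for `y` and `z`. Dividing
out `x^ν₁ y^ν₂ z^ν₃` leaves exponents `d - ν i - m i`, for which the degree and the memberships of
`g` are elementary inequalities; uniqueness is cancellation in a domain.
-/

open MvPolynomial

namespace Finsupp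

variable {σ : Type*}

theorem degree_eq_sum_of_support_subset {s : Finset σ} {m : σ →₀ ℕ} (h : m.support ⊆ s) :
    m.degree = ∑ i ∈ s, m i :=
  Finset.sum_subset h fun _ _ hi => notMem_support_iff.mp hi

theorem degree_filter_mem [DecidableEq σ] (s : Finset σ) (m : σ →₀ ℕ) :
    (m.filter (· ∈ s)).degree = ∑ i ∈ s, m i :=
  Finset.sum_subset_zero_on_sdiff (by intro i; simp) (by simp_all) fun _ _ => by simp_all

theorem add_le_degree {i j : σ} (hij : i ≠ j) (m : σ →₀ ℕ) : m i + m j ≤ m.degree := by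
  classical
  rw [← Finset.sum_pair hij]
  exact Finset.sum_le_sum_of_ne_zero fun k _ hk => mem_support_iff.mpr hk

end Finsupp

namespace MvPolynomial

section SpanX

variable {σ R : Type*} [CommSemiring R]

theorem mem_pow_span_X_image_iff {s : Finset σ} {n : ℕ} {p : MvPolynomial σ R} :
    p ∈ Ideal.span (X '' ↑s) ^ n ↔ ∀ m ∈ p.support, n ≤ ∑ i ∈ s, m i := by
  classical
  rw [Ideal.span, Submodule.span_pow, Finsupp.image_pow_eq_finsuppProd_image]
  simp_rw [Finsupp.prod, prod_X_pow_eq_monomial]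
  rw [mem_ideal_span_monomial_image]
  refine forall₂_congr fun m _ => ⟨?_, fun h => ?_⟩
  · rintro ⟨t, ⟨rfl, hts⟩, htm⟩
    rw [Finsupp.degree_eq_sum_of_support_subset (s := s) (by exact_mod_cast hts)]
    exact Finset.sum_le_sum fun i _ => htm i
  · obtain ⟨t, hts, rfl⟩ :=
      Finsupp.exists_le_degree_eq _ n ((Finsupp.degree_filter_mem s m).symm ▸ h)
    refine ⟨t, ⟨rfl, fun i hi => ?_⟩, hts.trans fun i => ?_⟩
    · exact (Finset.mem_filter.mp (Finsupp.support_mono hts hi)).2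
    · by_cases hi : i ∈ s <;> simp [hi]

theorem mem_pow_span_X_pair_iff {i j : σ} (hij : i ≠ j) {n : ℕ} {p : MvPolynomial σ R} :
    p ∈ Ideal.span {X i, X j} ^ n ↔ ∀ m ∈ p.support, n ≤ m i + m j := by
  classical
  simpa [Finset.sum_pair hij, Set.image_pair] using
    mem_pow_span_X_image_iff (s := {i, j}) (n := n) (p := p)

end SpanX

section QuadraticSubst

variable {R : Type*} [CommSemiring R]

noncomputable def quadraticSubst : MvPolynomial (Fin 3) R →ₐ[R] MvPolynomial (Fin 3) R :=
  aeval ![X 1 * X 2, X 0 * X 2, X 0 * X 1]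

theorem monomial_fin_three (m : Fin 3 →₀ ℕ) (c : R) :
    monomial m c = C c * X 0 ^ m 0 * X 1 ^ m 1 * X 2 ^ m 2 := by
  rw [monomial_eq, Finsupp.prod_fintype _ _ fun _ => pow_zero _, Fin.prod_univ_three, mul_assoc,
    mul_assoc, mul_assoc]

theorem quadraticSubst_monomial (m : Fin 3 →₀ ℕ) (c : R) :
    quadraticSubst (monomial m c) =
      monomial (Finsupp.equivFunOnFinite.symm fun i => m.degree - m i) c := by
  have h₀ : m 0 + m 1 + m 2 - m 0 = m 1 + m 2 := by omega
  have h₁ : m 0 + m 1 + m 2 - m 1 = m 0 + m 2 := by omega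
  have h₂ : m 0 + m 1 + m 2 - m 2 = m 0 + m 1 := by omega
  simp only [monomial_fin_three, quadraticSubst, map_mul, map_pow, aeval_C, aeval_X,
    Finsupp.coe_equivFunOnFinite_symm, Finsupp.degree_eq_sum, Fin.sum_univ_three, h₀, h₁, h₂]
  simp only [algebraMap_eq, Matrix.cons_val]
  ring

/-- `σ(f) / x^ν` for `f` homogeneous of degree `d`: `σ` turns the exponent `m i` into `d - m i`. -/
noncomputable def quadraticSubstDiv (d : ℕ) (ν : Fin 3 → ℕ) (f : MvPolynomial (Fin 3) R) :
    MvPolynomial (Fin 3) R :=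
  ∑ m ∈ f.support, monomial (Finsupp.equivFunOnFinite.symm fun i => d - ν i - m i) (coeff m f)

variable {d : ℕ} {ν : Fin 3 → ℕ} {f : MvPolynomial (Fin 3) R}

theorem quadraticSubst_eq_mul_quadraticSubstDiv (hf : f.IsHomogeneous d)
    (hν : ∀ m ∈ f.support, ∀ i, ν i + m i ≤ d) :
    quadraticSubst f = X 0 ^ ν 0 * X 1 ^ ν 1 * X 2 ^ ν 2 * quadraticSubstDiv d ν f := by
  have hX : (X 0 ^ ν 0 * X 1 ^ ν 1 * X 2 ^ ν 2 : MvPolynomial (Fin 3) R) =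
      monomial (Finsupp.equivFunOnFinite.symm ν) 1 := by
    simp [monomial_fin_three]
  conv_lhs => rw [← f.support_sum_monomial_coeff]
  rw [map_sum, hX, quadraticSubstDiv, Finset.mul_sum]
  refine Finset.sum_congr rfl fun m hm => ?_
  rw [quadraticSubst_monomial, monomial_mul, one_mul]
  congr 2
  ext i
  have hdeg : m.degree = d := (hf.degree_eq_sum_deg_support hm).symm
  have := hν m hm i
  simp only [Finsupp.coe_equivFunOnFinite_symm, Finsupp.coe_add, Pi.add_apply]
  omega

theorem isHomogeneous_quadraticSubstDiv (hf : f.IsHomogeneous d)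
    (hν : ∀ m ∈ f.support, ∀ i, ν i + m i ≤ d) :
    (quadraticSubstDiv d ν f).IsHomogeneous (2 * d - ν 0 - ν 1 - ν 2) := by
  refine IsHomogeneous.sum _ _ _ fun m hm => isHomogeneous_monomial _ ?_
  have hdeg : m.degree = d := (hf.degree_eq_sum_deg_support hm).symm
  have := hν m hm 0
  have := hν m hm 1
  have := hν m hm 2
  rw [Finsupp.degree_eq_sum, Fin.sum_univ_three] at hdeg ⊢
  simp only [Finsupp.coe_equivFunOnFinite_symm]
  omega

theorem quadraticSubstDiv_mem_pow_span_X_pair (hf : f.IsHomogeneous d)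
    (hν : ∀ m ∈ f.support, ∀ i, ν i + m i ≤ d) {i j : Fin 3} (hij : i ≠ j) :
    quadraticSubstDiv d ν f ∈ Ideal.span {X i, X j} ^ (d - ν i - ν j) := by
  refine Ideal.sum_mem _ fun m hm => (mem_pow_span_X_pair_iff hij).mpr fun e he => ?_
  obtain rfl := Finset.mem_singleton.mp (support_monomial_subset he)
  have hdeg : m.degree = d := (hf.degree_eq_sum_deg_support hm).symm
  have := Finsupp.add_le_degree hij m
  have := hν m hm i
  have := hν m hm j
  simp only [Finsupp.coe_equivFunOnFinite_symm]
  omega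

end QuadraticSubst

end MvPolynomial

theorem stmt5_general {k : Type*} [Field k] (d : ℕ) (f : MvPolynomial (Fin 3) k)
    (hf : f.IsHomogeneous d) (ν₁ ν₂ ν₃ : ℕ)
    (h₁ : f ∈ (Ideal.span {(X 1 : MvPolynomial (Fin 3) k), X 2}) ^ ν₁)
    (h₂ : f ∈ (Ideal.span {(X 0 : MvPolynomial (Fin 3) k), X 2}) ^ ν₂)
    (h₃ : f ∈ (Ideal.span {(X 0 : MvPolynomial (Fin 3) k), X 1}) ^ ν₃) :
    ∃! g : MvPolynomial (Fin 3) k,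
      aeval ![X 1 * X 2, X 0 * X 2, X 0 * X 1] f =
          (X 0 : MvPolynomial (Fin 3) k) ^ ν₁ * X 1 ^ ν₂ * X 2 ^ ν₃ * g ∧
      g.IsHomogeneous (2 * d - ν₁ - ν₂ - ν₃) ∧
      g ∈ (Ideal.span {(X 1 : MvPolynomial (Fin 3) k), X 2}) ^ (d - ν₂ - ν₃) ∧
      g ∈ (Ideal.span {(X 0 : MvPolynomial (Fin 3) k), X 2}) ^ (d - ν₁ - ν₃) ∧
      g ∈ (Ideal.span {(X 0 : MvPolynomial (Fin 3) k), X 1}) ^ (d - ν₁ - ν₂) := by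
  have hν : ∀ m ∈ f.support, ∀ i, ![ν₁, ν₂, ν₃] i + m i ≤ d := by
    intro m hm i
    have hm₁ := (mem_pow_span_X_pair_iff (by decide)).mp h₁ m hm
    have hm₂ := (mem_pow_span_X_pair_iff (by decide)).mp h₂ m hm
    have hm₃ := (mem_pow_span_X_pair_iff (by decide)).mp h₃ m hm
    have hdeg : m.degree = d := (hf.degree_eq_sum_deg_support hm).symm
    rw [Finsupp.degree_eq_sum, Fin.sum_univ_three] at hdeg
    fin_cases i <;> simp only [Fin.zero_eta, Fin.mk_one, Fin.reduceFinMk, Matrix.cons_val] <;>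
      omega
  have hσf := quadraticSubst_eq_mul_quadraticSubstDiv hf hν
  refine ⟨quadraticSubstDiv d ![ν₁, ν₂, ν₃] f, ⟨hσf, isHomogeneous_quadraticSubstDiv hf hν,
    quadraticSubstDiv_mem_pow_span_X_pair hf hν (by decide),
    quadraticSubstDiv_mem_pow_span_X_pair hf hν (by decide),
    quadraticSubstDiv_mem_pow_span_X_pair hf hν (by decide)⟩, ?_⟩
  rintro g ⟨hg, -⟩
  exact mul_left_cancel₀ (by simp) (hg.symm.trans hσf)

/-- Let `f ∈ k[x,y,z]` be homogeneous of degree `d`, and let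
`ν₁, ν₂, ν₃ ≥ 0` with `ν₂+ν₃ ≤ d`, `ν₁+ν₃ ≤ d`, `ν₁+ν₂ ≤ d`.  If
`f ∈ (y,z)^{ν₁} ∩ (x,z)^{ν₂} ∩ (x,y)^{ν₃}`, then
`σ(f) = x^{ν₁} y^{ν₂} z^{ν₃} · g` for a unique homogeneous polynomial `g` of
degree `2d − ν₁ − ν₂ − ν₃` with
`g ∈ (y,z)^{d−ν₂−ν₃} ∩ (x,z)^{d−ν₁−ν₃} ∩ (x,y)^{d−ν₁−ν₂}`. -/
theorem stmt5 {k : Type*} [Field k] (d : ℕ) (f : MvPolynomial (Fin 3) k)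
    (hf : f.IsHomogeneous d) (ν₁ ν₂ ν₃ : ℕ)
    (h23 : ν₂ + ν₃ ≤ d) (h13 : ν₁ + ν₃ ≤ d) (h12 : ν₁ + ν₂ ≤ d)
    (h₁ : f ∈ (Ideal.span {(X 1 : MvPolynomial (Fin 3) k), X 2}) ^ ν₁)
    (h₂ : f ∈ (Ideal.span {(X 0 : MvPolynomial (Fin 3) k), X 2}) ^ ν₂)
    (h₃ : f ∈ (Ideal.span {(X 0 : MvPolynomial (Fin 3) k), X 1}) ^ ν₃) :
    ∃! g : MvPolynomial (Fin 3) k,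
      aeval ![X 1 * X 2, X 0 * X 2, X 0 * X 1] f =
          (X 0 : MvPolynomial (Fin 3) k) ^ ν₁ * X 1 ^ ν₂ * X 2 ^ ν₃ * g ∧
      g.IsHomogeneous (2 * d - ν₁ - ν₂ - ν₃) ∧
      g ∈ (Ideal.span {(X 1 : MvPolynomial (Fin 3) k), X 2}) ^ (d - ν₂ - ν₃) ∧
      g ∈ (Ideal.span {(X 0 : MvPolynomial (Fin 3) k), X 2}) ^ (d - ν₁ - ν₃) ∧
      g ∈ (Ideal.span {(X 0 : MvPolynomial (Fin 3) k), X 1}) ^ (d - ν₁ - ν₂) :=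
  stmt5_general d f hf ν₁ ν₂ ν₃ h₁ h₂ h₃
end

section
/- Let s ≥ 2 be an integer, r ≥ 3, and μ₁,…,μ_r integers with ∑ᵢ μᵢ = 3(s−1) and ∑ᵢ μᵢ² = s(s−1). Set μ̄ = μ₁+μ₂+μ₃, d = 2s − μ̄, and define m₁ = s−μ₂−μ₃, m₂ = s−μ₁−μ₃, m₃ = s−μ₁−μ₂, and mᵢ = μᵢ for i ≥ 4. Then ∑ᵢ mᵢ = 3(d−1) and ∑ᵢ mᵢ² = d² − s; moreover, ∑ᵢ mᵢ(mᵢ+1)/2 = d(d+1)/2 if and only if μ̄ = 3(s−1)/2 (equivalently, if and only if d = (s+3)/2). -/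
private lemma sum_first_three (r : ℕ) (hr : 3 ≤ r)
    (f : Fin r → ℤ) (hf : ∀ i : Fin r, 3 ≤ i.val → f i = 0) :
    ∑ i, f i = f ⟨0, by omega⟩ + f ⟨1, by omega⟩ + f ⟨2, by omega⟩ := by
  have e : ∑ i, f i = ∑ n ∈ Finset.range r, (if h : n < r then f ⟨n, h⟩ else 0) := by
    rw [← Fin.sum_univ_eq_sum_range (fun n => if h : n < r then f ⟨n, h⟩ else 0) r]
    exact Finset.sum_congr rfl (fun i _ => by rw [dif_pos i.isLt])
  rw [e, ← Finset.sum_range_add_sum_Ico _ hr]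
  have z : ∑ n ∈ Finset.Ico 3 r, (if h : n < r then f ⟨n, h⟩ else 0) = 0 := by
    apply Finset.sum_eq_zero
    intro n hn
    rw [Finset.mem_Ico] at hn
    rw [dif_pos hn.2]
    exact hf _ hn.1
  rw [z, add_zero, Finset.sum_range_succ, Finset.sum_range_succ, Finset.sum_range_one]
  rw [dif_pos, dif_pos, dif_pos]

/-- Let `s ≥ 2`, `r ≥ 3`, and integers `μ₁, …, μ_r` with
`∑ μᵢ = 3(s−1)` and `∑ μᵢ² = s(s−1)`.  With `μ̄ = μ₁+μ₂+μ₃`, `d = 2s − μ̄`,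
`m₁ = s−μ₂−μ₃`, `m₂ = s−μ₁−μ₃`, `m₃ = s−μ₁−μ₂` and `mᵢ = μᵢ` for `i ≥ 4`,
one has `∑ mᵢ = 3(d−1)` and `∑ mᵢ² = d² − s`; moreover
`∑ mᵢ(mᵢ+1)/2 = d(d+1)/2` if and only if `μ̄ = 3(s−1)/2`, equivalently if and
only if `d = (s+3)/2`. -/
theorem stmt12 (r : ℕ) (hr : 3 ≤ r) (s : ℤ) (hs : 2 ≤ s)
    (μ : Fin r → ℤ)
    (hsum : ∑ i, μ i = 3 * (s - 1))
    (hsq : ∑ i, (μ i) ^ 2 = s * (s - 1))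
    (μbar d : ℤ)
    (hμbar : μbar = μ ⟨0, by omega⟩ + μ ⟨1, by omega⟩ + μ ⟨2, by omega⟩)
    (hd : d = 2 * s - μbar)
    (m : Fin r → ℤ)
    (hm0 : m ⟨0, by omega⟩ = s - μ ⟨1, by omega⟩ - μ ⟨2, by omega⟩)
    (hm1 : m ⟨1, by omega⟩ = s - μ ⟨0, by omega⟩ - μ ⟨2, by omega⟩)
    (hm2 : m ⟨2, by omega⟩ = s - μ ⟨0, by omega⟩ - μ ⟨1, by omega⟩)
    (hmi : ∀ i : Fin r, 3 ≤ i.val → m i = μ i) :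
    (∑ i, m i = 3 * (d - 1)) ∧ (∑ i, (m i) ^ 2 = d ^ 2 - s) ∧
    ((∑ i, m i * (m i + 1) = d * (d + 1)) ↔ 2 * μbar = 3 * (s - 1)) ∧
    ((2 * μbar = 3 * (s - 1)) ↔ 2 * d = s + 3) := by
  have k1 : ∑ i, (m i - μ i) = (m ⟨0, by omega⟩ - μ ⟨0, by omega⟩)
      + (m ⟨1, by omega⟩ - μ ⟨1, by omega⟩) + (m ⟨2, by omega⟩ - μ ⟨2, by omega⟩) :=
    sum_first_three r hr _ (fun i hi => by rw [hmi i hi]; ring)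
  have k2 : ∑ i, ((m i)^2 - (μ i)^2) = ((m ⟨0, by omega⟩)^2 - (μ ⟨0, by omega⟩)^2)
      + ((m ⟨1, by omega⟩)^2 - (μ ⟨1, by omega⟩)^2)
      + ((m ⟨2, by omega⟩)^2 - (μ ⟨2, by omega⟩)^2) :=
    sum_first_three r hr _ (fun i hi => by rw [hmi i hi]; ring)
  simp only [Finset.sum_sub_distrib] at k1 k2
  simp only [hsum, hm0, hm1, hm2] at k1
  simp only [hsq, hm0, hm1, hm2] at k2
  have g1 : ∑ i, m i = 3 * (d - 1) := by rw [hd, hμbar]; linarith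
  have g2 : ∑ i, (m i)^2 = d^2 - s := by rw [hd, hμbar]; nlinarith [k2]
  have g3 : ∑ i, m i * (m i + 1) = d^2 - s + 3 * (d - 1) := by
    have e : ∑ i, m i * (m i + 1) = ∑ i, ((m i)^2 + m i) :=
      Finset.sum_congr rfl (fun i _ => by ring)
    rw [e, Finset.sum_add_distrib, g1, g2]
  refine ⟨g1, g2, ?_, ?_⟩
  · rw [g3]
    constructor
    · intro h; linarith
    · intro h; linarith
  · constructor <;> intro h <;> linarith
end
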